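/- Let g ∈ ℋ_α for some α ∈ (0, 1]. Then for every M > 0 there exists C > 0 such that for all θ, θ' in the closed ball of radius M centered at 0 in ℝ^d and all n ∈ ℕ*, E((M_n(θ, g) − M_n(θ', g))²) ≤ C |θ − θ'|^{2α} / n. -/

import Mathlib

open MeasureTheory ProbabilityTheory Filter Real Topology

noncomputable section

/-- Euclidean norm on `ℝ^k`. -/
def nrm {k : ℕ} (x : Fin k → ℝ) : ℝ := Real.sqrt (∑ i, x i ^ 2)

/-- Euclidean inner (dot) product on `ℝ^k`. -/
def dot {k : ℕ} (x y : Fin k → ℝ) : ℝ := ∑ i, x i * y i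

/-- The standard Gaussian measure on `ℝ^d`. -/
def stdGaussian (d : ℕ) : Measure (Fin d → ℝ) :=
  MeasureTheory.Measure.pi fun _ => ProbabilityTheory.gaussianReal 0 1

/-- `v^f(θ) = E(f²(G) e^{-θ·G + |θ|²/2})`. -/
def vF {d : ℕ} (f : (Fin d → ℝ) → ℝ) (θ : Fin d → ℝ) : ℝ :=
  ∫ x, f x ^ 2 * Real.exp (-(dot θ x) + nrm θ ^ 2 / 2) ∂ stdGaussian d

/-- `v^{f,A}(ϑ) = v^f(Aϑ)`. -/
def vFA {d d' : ℕ} (A : Matrix (Fin d) (Fin d') ℝ) (f : (Fin d → ℝ) → ℝ)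
    (ϑ : Fin d' → ℝ) : ℝ :=
  vF f (A.mulVec ϑ)

/-- The sample average approximation `v_n^{f,A}`. -/
def vnFA {d d' : ℕ} {Ω : Type*} (Gs : ℕ → Ω → Fin d → ℝ)
    (A : Matrix (Fin d) (Fin d') ℝ) (f : (Fin d → ℝ) → ℝ) (n : ℕ) (ω : Ω)
    (ϑ : Fin d' → ℝ) : ℝ :=
  (1 / n : ℝ) * ∑ i ∈ Finset.range n,
    f (Gs i ω) ^ 2 * Real.exp (-(dot (A.mulVec ϑ) (Gs i ω)) + nrm (A.mulVec ϑ) ^ 2 / 2)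

/-- The importance sampling estimator `M_n(θ, g)`. -/
def Mn {d : ℕ} {Ω : Type*} (Gs : ℕ → Ω → Fin d → ℝ) (n : ℕ) (θ : Fin d → ℝ)
    (g : (Fin d → ℝ) → ℝ) (ω : Ω) : ℝ :=
  (1 / n : ℝ) * ∑ i ∈ Finset.range n,
    g (Gs i ω + θ) * Real.exp (-(dot θ (Gs i ω)) - nrm θ ^ 2 / 2)

/-- The Hölder class `ℋ_α`. -/
def MemH {d : ℕ} (α : ℝ) (g : (Fin d → ℝ) → ℝ) : Prop :=
  ∃ β ∈ Set.Ico (0 : ℝ) 2, ∃ lam > (0 : ℝ),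
    (∀ x, |g x| ≤ lam * Real.exp (nrm x ^ β)) ∧
    ∀ x y, |g x - g y| ≤ lam * Real.exp (max (nrm x ^ β) (nrm y ^ β)) * nrm (x - y) ^ α

/-- `𝒜`-monotonicity of a function on `ℝ^d` for a vector `𝒜 ∈ ℝ^d`. -/
def AMonotonic {d : ℕ} (𝒜 : Fin d → ℝ) (h : (Fin d → ℝ) → ℝ) : Prop :=
  (∀ x, Monotone fun ϑ : ℝ => h (x + ϑ • 𝒜)) ∨ (∀ x, Antitone fun ϑ : ℝ => h (x + ϑ • 𝒜))

/-- The class `𝒱_𝒜`. -/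
def MemV {d : ℕ} (𝒜 : Fin d → ℝ) (h : (Fin d → ℝ) → ℝ) : Prop :=
  ∃ g₁ g₂ : (Fin d → ℝ) → ℝ, h = g₁ + g₂ ∧ AMonotonic 𝒜 g₁ ∧ AMonotonic 𝒜 g₂ ∧
    ∃ lam > (0 : ℝ), ∃ β ∈ Set.Ico (0 : ℝ) 2,
      ∀ x, |g₁ x| ≤ lam * Real.exp (nrm x ^ β) ∧ |g₂ x| ≤ lam * Real.exp (nrm x ^ β)

/-!
Write `w_θ(x) = exp (-θ·x - |θ|²/2)` and `Φ(x) = g(x+θ) w_θ(x) - g(x+θ') w_θ'(x)`, so that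
`M_n(θ, g) - M_n(θ', g)` is the empirical mean of the i.i.d. variables `Φ(G_i)`. The weight
`w_θ` is the Cameron–Martin density that turns the law of `G + θ` back into that of `G`, so
`E[g(G+θ) w_θ(G)] = E[g(G)]` for every `θ`: `Φ(G)` is centred and the second moment of the
empirical mean is `E[Φ(G)²] / n`. The growth and Hölder bounds on `g` give
`|Φ(x)| ≤ C |θ-θ'|^α exp (ε|x|²)` for `θ, θ'` in the ball of radius `M`, the Lipschitz factor
`|θ-θ'|` coming from the weights being absorbed by `|θ-θ'| ≤ (2M)^(1-α) |θ-θ'|^α`. By Fernique's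
theorem `exp (2ε|x|²)` is Gaussian-integrable for small `ε`, which bounds `E[Φ(G)²]` by a constant
times `|θ-θ'|^(2α)`.
-/

open scoped ENNReal NNReal

lemma nrm_eq_norm {k : ℕ} (x : Fin k → ℝ) : nrm x = ‖WithLp.toLp 2 x‖ := by
  simp [EuclideanSpace.norm_eq, nrm]

lemma dot_eq_inner {k : ℕ} (x y : Fin k → ℝ) :
    dot x y = inner ℝ (WithLp.toLp 2 x) (WithLp.toLp 2 y) := by
  simp [dot, PiLp.inner_apply, mul_comm]

lemma nrm_nonneg {k : ℕ} (x : Fin k → ℝ) : 0 ≤ nrm x := Real.sqrt_nonneg _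

lemma nrm_add_le {k : ℕ} (x y : Fin k → ℝ) : nrm (x + y) ≤ nrm x + nrm y := by
  simpa only [nrm_eq_norm, WithLp.toLp_add] using norm_add_le _ _

lemma nrm_sub_le {k : ℕ} (x y : Fin k → ℝ) : nrm (x - y) ≤ nrm x + nrm y := by
  simpa only [nrm_eq_norm, WithLp.toLp_sub] using norm_sub_le _ _

lemma abs_nrm_sub_nrm_le {k : ℕ} (x y : Fin k → ℝ) : |nrm x - nrm y| ≤ nrm (x - y) := by
  simpa only [nrm_eq_norm, WithLp.toLp_sub] using abs_norm_sub_norm_le _ _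

lemma abs_dot_le {k : ℕ} (x y : Fin k → ℝ) : |dot x y| ≤ nrm x * nrm y := by
  simpa only [dot_eq_inner, nrm_eq_norm] using abs_real_inner_le_norm _ _

lemma dot_sub_left {k : ℕ} (x y z : Fin k → ℝ) : dot (x - y) z = dot x z - dot y z := by
  simp [dot, sub_mul, Finset.sum_sub_distrib]

@[fun_prop]
lemma continuous_nrm {k : ℕ} : Continuous (nrm (k := k)) := by
  unfold nrm; fun_prop

lemma nrm_sq {k : ℕ} (x : Fin k → ℝ) : nrm x ^ 2 = ∑ i, x i ^ 2 :=
  Real.sq_sqrt (Finset.sum_nonneg fun _ _ => sq_nonneg _)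

lemma abs_exp_sub_exp_le (a b : ℝ) : |exp a - exp b| ≤ exp (max a b) * |a - b| := by
  wlog hab : b ≤ a generalizing a b
  · simpa only [abs_sub_comm, max_comm] using this b a (le_of_not_ge hab)
  have key : exp a - exp b = exp a * (1 - exp (b - a)) := by
    rw [mul_sub, mul_one, ← exp_add, add_sub_cancel]
  rw [max_eq_left hab, key, abs_mul, abs_of_pos (exp_pos a), abs_of_nonneg (sub_nonneg.2 hab),
    abs_of_nonneg (sub_nonneg.2 (exp_le_one_iff.2 (sub_nonpos.2 hab)))]
  exact mul_le_mul_of_nonneg_left (by linarith [add_one_le_exp (b - a)]) (exp_pos a).le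

lemma rpow_le_add_mul_sq {β ε : ℝ} (hβ : 0 ≤ β) (hβ2 : β < 2) (hε : 0 < ε) :
    ∃ C, ∀ s, 0 ≤ s → s ^ β ≤ C + ε * s ^ 2 := by
  set R := ε ^ (β - 2)⁻¹
  have hR : 0 < R := rpow_pos_of_pos hε _
  have hRε : R ^ (β - 2) = ε := by
    rw [← rpow_mul hε.le, inv_mul_cancel₀ (by linarith), rpow_one]
  refine ⟨R ^ β, fun s hs => ?_⟩
  rcases le_total s R with hsR | hRs
  · have := rpow_le_rpow hs hsR hβ
    nlinarith [sq_nonneg s]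
  · have hs0 : 0 < s := hR.trans_le hRs
    have hsplit : s ^ β = s ^ (β - 2) * s ^ 2 := by
      rw [← rpow_natCast, ← rpow_add hs0]
      norm_num
    have : s ^ (β - 2) ≤ ε := hRε ▸ rpow_le_rpow_of_nonpos hR hRs (by linarith)
    have : 0 ≤ R ^ β := (rpow_pos_of_pos hR β).le
    nlinarith [sq_nonneg s]

lemma exists_growth_le_exp_mul_sq {β M ε : ℝ} (hβ : 0 ≤ β) (hβ2 : β < 2) (hM : 0 ≤ M)
    (hε : 0 < ε) : ∃ K > 0, ∀ t, 0 ≤ t →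
      (1 + t + M) * exp ((t + M) ^ β + M * t) ≤ K * exp (ε * t ^ 2) := by
  obtain ⟨C, hC⟩ := rpow_le_add_mul_sq hβ hβ2 (half_pos (half_pos hε))
  refine ⟨exp (C + ε * M ^ 2 / 2 + (M + 1) ^ 2 / (2 * ε) + M), exp_pos _, fun t ht => ?_⟩
  have hrpow := hC (t + M) (by linarith)
  have hlin : (M + 1) * t ≤ (M + 1) ^ 2 / (2 * ε) + ε / 2 * t ^ 2 := by
    rw [div_add' _ _ _ (by positivity), le_div_iff₀ (by positivity)]
    nlinarith [sq_nonneg ((M + 1) - ε * t)]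
  calc (1 + t + M) * exp ((t + M) ^ β + M * t)
      ≤ exp (t + M) * exp ((t + M) ^ β + M * t) := by
        gcongr
        linarith [add_one_le_exp (t + M)]
    _ ≤ exp ((C + ε * M ^ 2 / 2 + (M + 1) ^ 2 / (2 * ε) + M) + ε * t ^ 2) := by
        rw [← exp_add]
        refine exp_le_exp.2 ?_
        nlinarith [sq_nonneg (t - M)]
    _ = _ := exp_add _ _

lemma le_rpow_one_sub_mul_rpow {ρ R α : ℝ} (hρ : 0 ≤ ρ) (hρR : ρ ≤ R) (hα : α ≤ 1) :
    ρ ≤ R ^ (1 - α) * ρ ^ α := by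
  rcases hρ.eq_or_lt with rfl | hpos
  · exact mul_nonneg (rpow_nonneg hρR _) (rpow_nonneg le_rfl _)
  calc ρ = ρ ^ (1 - α) * ρ ^ α := by rw [← rpow_add hpos, sub_add_cancel, rpow_one]
    _ ≤ R ^ (1 - α) * ρ ^ α := by gcongr

namespace MeasureTheory.Measure

variable {ι : Type*} [Fintype ι] {X : ι → Type*} [∀ i, MeasurableSpace (X i)]
  {μ : (i : ι) → Measure (X i)} [∀ i, IsProbabilityMeasure (μ i)]

theorem lintegral_pi_prod {f : (i : ι) → X i → ℝ≥0∞} (hf : ∀ i, Measurable (f i)) :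
    ∫⁻ x, ∏ i, f i (x i) ∂Measure.pi μ = ∏ i, ∫⁻ y, f i y ∂μ i := by
  refine (lintegral_prod_eq_prod_lintegral_of_indepFun Finset.univ
    (fun i (x : (i : ι) → X i) => f i (x i)) (iIndepFun_pi (μ := μ) fun i => (hf i).aemeasurable)
    fun i => (hf i).comp (measurable_pi_apply i)).trans ?_
  exact Finset.prod_congr rfl fun i _ => (measurePreserving_eval μ i).lintegral_comp (hf i)

theorem pi_withDensity {f : (i : ι) → X i → ℝ≥0∞} (hf : ∀ i, Measurable (f i))
    [∀ i, SigmaFinite ((μ i).withDensity (f i))] :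
    Measure.pi (fun i => (μ i).withDensity (f i))
      = (Measure.pi μ).withDensity (fun x => ∏ i, f i (x i)) := by
  refine pi_eq fun s hs => ?_
  have hbox : (Set.univ.pi s).indicator (fun x => ∏ i, f i (x i))
      = fun x => ∏ i, (s i).indicator (f i) (x i) := by
    ext x
    by_cases hx : ∀ i, x i ∈ s i
    · simp [Set.indicator_of_mem (Set.mem_univ_pi.2 hx), Set.indicator_of_mem (hx _)]
    · obtain ⟨i, hi⟩ := not_forall.1 hx
      rw [Set.indicator_of_notMem (fun h => hi (Set.mem_univ_pi.1 h i))]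
      exact (Finset.prod_eq_zero (Finset.mem_univ i) (Set.indicator_of_notMem hi _)).symm
  rw [withDensity_apply _ (.univ_pi hs), ← lintegral_indicator (.univ_pi hs), hbox,
    lintegral_pi_prod fun i => (hf i).indicator (hs i)]
  exact Finset.prod_congr rfl fun i _ => by
    rw [withDensity_apply _ (hs i), lintegral_indicator (hs i)]

end MeasureTheory.Measure

theorem gaussianReal_withDensity_exp (t : ℝ) :
    (gaussianReal 0 1).withDensity (fun y => ENNReal.ofReal (exp (-(t * y) - t ^ 2 / 2)))
      = gaussianReal (-t) 1 := by
  rw [gaussianReal_of_var_ne_zero _ one_ne_zero, gaussianReal_of_var_ne_zero _ one_ne_zero,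
    ← withDensity_mul _ (measurable_gaussianPDF _ _) (by fun_prop)]
  congr 1
  ext y
  rw [Pi.mul_apply, gaussianPDF, gaussianPDF, ← ENNReal.ofReal_mul (gaussianPDFReal_nonneg _ _ _),
    gaussianPDFReal, gaussianPDFReal, mul_assoc, ← exp_add]
  congr 3
  push_cast
  ring

instance (d : ℕ) : IsProbabilityMeasure (stdGaussian d) := by
  unfold _root_.stdGaussian; infer_instance

theorem exists_integrable_exp_mul_nrm_sq (d : ℕ) :
    ∃ c > 0, Integrable (fun x => exp (c * nrm x ^ 2)) (stdGaussian d) := by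
  obtain ⟨c, hc, hint⟩ :=
    IsGaussian.exists_integrable_exp_sq (ProbabilityTheory.stdGaussian (EuclideanSpace ℝ (Fin d)))
  refine ⟨c, hc, ?_⟩
  have hpi : stdGaussian d
      = (ProbabilityTheory.stdGaussian (EuclideanSpace ℝ (Fin d))).map WithLp.ofLp := by
    rw [← map_pi_eq_stdGaussian, Measure.map_map (by fun_prop) (by fun_prop)]
    exact Measure.map_id.symm
  rw [hpi, integrable_map_measure (by fun_prop) (by fun_prop)]
  simpa [Function.comp_def, nrm_eq_norm] using hint

def importanceWeight {d : ℕ} (θ x : Fin d → ℝ) : ℝ := exp (-(dot θ x) - nrm θ ^ 2 / 2)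

lemma importanceWeight_pos {d : ℕ} (θ x : Fin d → ℝ) : 0 < importanceWeight θ x := exp_pos _

lemma importanceWeight_eq_prod {d : ℕ} (θ x : Fin d → ℝ) :
    importanceWeight θ x = ∏ i, exp (-(θ i * x i) - θ i ^ 2 / 2) := by
  rw [importanceWeight, ← exp_sum, nrm_sq, dot, Finset.sum_sub_distrib, Finset.sum_neg_distrib,
    Finset.sum_div]

theorem stdGaussian_withDensity_map_add {d : ℕ} (θ : Fin d → ℝ) :
    ((stdGaussian d).withDensity fun x => ENNReal.ofReal (importanceWeight θ x)).map (· + θ)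
      = stdGaussian d := by
  simp_rw [importanceWeight_eq_prod,
    ENNReal.ofReal_prod_of_nonneg fun _ _ => (exp_pos _).le]
  rw [_root_.stdGaussian, ← Measure.pi_withDensity
    (f := fun i y => ENNReal.ofReal (exp (-(θ i * y) - θ i ^ 2 / 2))) fun _ => by fun_prop]
  simp_rw [gaussianReal_withDensity_exp]
  rw [show (· + θ) = fun x i => x i + θ i from rfl,
    Measure.pi_map_pi (f := fun i y => y + θ i) fun _ => by fun_prop]
  simp_rw [gaussianReal_map_add_const, neg_add_cancel]

section ChangeOfMeasure

variable {d : ℕ} (θ : Fin d → ℝ)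

lemma measurable_importanceWeight : Measurable (importanceWeight θ) := by
  unfold importanceWeight dot nrm; fun_prop

lemma integrable_comp_add_mul_importanceWeight_iff (h : (Fin d → ℝ) → ℝ) :
    Integrable (fun x => h (x + θ) * importanceWeight θ x) (stdGaussian d)
      ↔ Integrable h (stdGaussian d) := by
  conv_rhs => rw [← stdGaussian_withDensity_map_add θ]
  rw [(measurableEmbedding_addRight θ).integrable_map_iff, integrable_withDensity_iff
    (measurable_importanceWeight θ).ennreal_ofReal (.of_forall fun _ => ENNReal.ofReal_lt_top)]
  simp [ENNReal.toReal_ofReal (exp_pos _).le, importanceWeight]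

lemma integral_comp_add_mul_importanceWeight (h : (Fin d → ℝ) → ℝ) :
    ∫ x, h (x + θ) * importanceWeight θ x ∂stdGaussian d = ∫ x, h x ∂stdGaussian d := by
  conv_rhs => rw [← stdGaussian_withDensity_map_add θ]
  rw [(measurableEmbedding_addRight θ).integral_map, integral_withDensity_eq_integral_toReal_smul
    (measurable_importanceWeight θ).ennreal_ofReal (.of_forall fun _ => ENNReal.ofReal_lt_top)]
  simp [ENNReal.toReal_ofReal (exp_pos _).le, importanceWeight, mul_comm]

end ChangeOfMeasure

def importanceSummand {d : ℕ} (g : (Fin d → ℝ) → ℝ) (θ x : Fin d → ℝ) : ℝ :=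
  g (x + θ) * importanceWeight θ x

lemma continuous_importanceSummand {d : ℕ} {g : (Fin d → ℝ) → ℝ} (hg : Continuous g)
    (θ : Fin d → ℝ) : Continuous (importanceSummand g θ) := by
  unfold importanceSummand importanceWeight dot nrm
  fun_prop

lemma Mn_sub_Mn {d : ℕ} {Ω : Type*} (Gs : ℕ → Ω → Fin d → ℝ) (n : ℕ) (θ θ' : Fin d → ℝ)
    (g : (Fin d → ℝ) → ℝ) (ω : Ω) :
    Mn Gs n θ g ω - Mn Gs n θ' g ω
      = 1 / n * ∑ i ∈ Finset.range n,
          (importanceSummand g θ (Gs i ω) - importanceSummand g θ' (Gs i ω)) := by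
  rw [Mn, Mn, ← mul_sub, ← Finset.sum_sub_distrib]
  rfl

section HolderBounds

variable {d : ℕ} {g : (Fin d → ℝ) → ℝ} {α β lam M : ℝ} {θ θ' : Fin d → ℝ}

lemma importanceWeight_le (hθ : nrm θ ≤ M) (x : Fin d → ℝ) :
    importanceWeight θ x ≤ exp (M * nrm x) := by
  refine exp_le_exp.2 ?_
  have := (abs_le.1 (abs_dot_le θ x)).1
  nlinarith [nrm_nonneg x, sq_nonneg (nrm θ)]

lemma abs_importanceWeight_sub_le (hθ : nrm θ ≤ M) (hθ' : nrm θ' ≤ M) (x : Fin d → ℝ) :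
    |importanceWeight θ x - importanceWeight θ' x|
      ≤ exp (M * nrm x) * (nrm (θ - θ') * (nrm x + M)) := by
  refine (abs_exp_sub_exp_le _ _).trans (mul_le_mul ?_ ?_ (abs_nonneg _) (exp_pos _).le)
  · rw [exp_monotone.map_max]
    exact max_le (importanceWeight_le hθ x) (importanceWeight_le hθ' x)
  have hdot := abs_dot_le (θ - θ') x
  have hsq : |nrm θ ^ 2 - nrm θ' ^ 2| ≤ nrm (θ - θ') * (2 * M) := by
    rw [sq_sub_sq, abs_mul, abs_of_nonneg (add_nonneg (nrm_nonneg _) (nrm_nonneg _)), mul_comm]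
    exact mul_le_mul (abs_nrm_sub_nrm_le θ θ') (by linarith)
      (add_nonneg (nrm_nonneg _) (nrm_nonneg _)) (nrm_nonneg _)
  rw [dot_sub_left] at hdot
  rw [abs_le] at hdot hsq ⊢
  constructor <;> nlinarith

lemma abs_importanceSummand_sub_le (hα : α ≤ 1) (hβ : 0 ≤ β) (hlam : 0 ≤ lam)
    (hbd : ∀ x, |g x| ≤ lam * exp (nrm x ^ β))
    (hHol : ∀ x y, |g x - g y| ≤ lam * exp (max (nrm x ^ β) (nrm y ^ β)) * nrm (x - y) ^ α)
    (hθ : nrm θ ≤ M) (hθ' : nrm θ' ≤ M) (x : Fin d → ℝ) :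
    |importanceSummand g θ x - importanceSummand g θ' x|
      ≤ lam * (1 + (2 * M) ^ (1 - α)) * nrm (θ - θ') ^ α
        * ((1 + nrm x + M) * exp ((nrm x + M) ^ β + M * nrm x)) := by
  set t := nrm x
  set ρ := nrm (θ - θ')
  have ht : 0 ≤ t := nrm_nonneg x
  have hM : 0 ≤ M := (nrm_nonneg θ).trans hθ
  have hρα : 0 ≤ ρ ^ α := rpow_nonneg (nrm_nonneg _) α
  have hgrowth (ϑ : Fin d → ℝ) (hϑ : nrm ϑ ≤ M) : nrm (x + ϑ) ^ β ≤ (t + M) ^ β :=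
    rpow_le_rpow (nrm_nonneg _) ((nrm_add_le x ϑ).trans (by linarith)) hβ
  have hgθ' : |g (x + θ')| ≤ lam * exp ((t + M) ^ β) :=
    (hbd _).trans (mul_le_mul_of_nonneg_left (exp_le_exp.2 (hgrowth θ' hθ')) hlam)
  have hgdiff : |g (x + θ) - g (x + θ')| ≤ lam * exp ((t + M) ^ β) * ρ ^ α := by
    refine (hHol _ _).trans ?_
    rw [add_sub_add_left_eq_sub]
    gcongr
    exact max_le (hgrowth θ hθ) (hgrowth θ' hθ')
  have hρ : ρ ≤ (2 * M) ^ (1 - α) * ρ ^ α :=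
    le_rpow_one_sub_mul_rpow (nrm_nonneg _) ((nrm_sub_le θ θ').trans (by linarith)) hα
  have hsplit : importanceSummand g θ x - importanceSummand g θ' x
      = (g (x + θ) - g (x + θ')) * importanceWeight θ x
        + g (x + θ') * (importanceWeight θ x - importanceWeight θ' x) := by
    simp only [importanceSummand]; ring
  have hw : |importanceWeight θ x| ≤ exp (M * t) := by
    rw [abs_of_pos (importanceWeight_pos θ x)]; exact importanceWeight_le hθ x
  have hwdiff := abs_importanceWeight_sub_le hθ hθ' x
  calc |importanceSummand g θ x - importanceSummand g θ' x|
      ≤ lam * exp ((t + M) ^ β) * ρ ^ α * exp (M * t)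
        + lam * exp ((t + M) ^ β) * (exp (M * t) * (ρ * (t + M))) := by
        rw [hsplit]
        refine (abs_add_le _ _).trans (add_le_add ?_ ?_) <;> rw [abs_mul] <;> gcongr
    _ = lam * exp ((t + M) ^ β + M * t) * (ρ ^ α + ρ * (t + M)) := by rw [exp_add]; ring
    _ ≤ lam * exp ((t + M) ^ β + M * t) * (ρ ^ α + (2 * M) ^ (1 - α) * ρ ^ α * (t + M)) := by
        gcongr
    _ ≤ lam * (1 + (2 * M) ^ (1 - α)) * ρ ^ α * ((1 + t + M) * exp ((t + M) ^ β + M * t)) := by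
        have : 0 ≤ (2 * M) ^ (1 - α) := rpow_nonneg (by linarith) _
        have : 0 ≤ lam * exp ((t + M) ^ β + M * t) * ρ ^ α := by positivity
        nlinarith [mul_nonneg this (mul_nonneg ‹0 ≤ (2 * M) ^ (1 - α)› (add_nonneg ht hM))]

end HolderBounds

theorem lintegral_sq_average_eq {Ω E : Type*} [MeasurableSpace Ω] {P : Measure Ω}
    [IsProbabilityMeasure P] [MeasurableSpace E] {μ : Measure E} {X : ℕ → Ω → E}
    (hmeas : ∀ i, Measurable (X i)) (hind : iIndepFun X P) (hlaw : ∀ i, P.map (X i) = μ)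
    {Φ : E → ℝ} (hΦm : Measurable Φ) (hΦ : MemLp Φ 2 μ) (hmean : ∫ x, Φ x ∂μ = 0) (n : ℕ) :
    ∫⁻ ω, ENNReal.ofReal ((1 / n * ∑ i ∈ Finset.range n, Φ (X i ω)) ^ 2) ∂P
      = ENNReal.ofReal ((∫ x, Φ x ^ 2 ∂μ) / n) := by
  have hlaw' (i : ℕ) : HasLaw (X i) μ P := ⟨(hmeas i).aemeasurable, hlaw i⟩
  have hY (i : ℕ) : MemLp (Φ ∘ X i) 2 P := hΦ.comp_measurePreserving ⟨hmeas i, hlaw i⟩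
  have hmeanY (i : ℕ) : P[Φ ∘ X i] = 0 := by
    rw [(hlaw' i).integral_comp hΦ.aestronglyMeasurable, hmean]
  have hvarY (i : ℕ) : Var[Φ ∘ X i; P] = ∫ x, Φ x ^ 2 ∂μ := by
    rw [variance_of_integral_eq_zero (hY i).aemeasurable (hmeanY i)]
    exact (hlaw' i).integral_comp (f := fun x => Φ x ^ 2) (hΦ.aestronglyMeasurable.pow 2)
  have hsum : MemLp (∑ i ∈ Finset.range n, Φ ∘ X i) 2 P := memLp_finsetSum' _ fun i _ => hY i
  have hS : ∫ ω, (∑ i ∈ Finset.range n, Φ (X i ω)) ^ 2 ∂P = n * ∫ x, Φ x ^ 2 ∂μ := by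
    have hvar := IndepFun.variance_sum (s := Finset.range n) (fun i _ => hY i)
      fun i _ j _ hij => (hind.indepFun hij).comp hΦm hΦm
    rw [variance_of_integral_eq_zero hsum.aemeasurable, Finset.sum_congr rfl fun i _ => hvarY i]
      at hvar
    · simpa using hvar
    · simp only [Finset.sum_apply]
      rw [integral_finsetSum _ fun i _ => (hY i).integrable one_le_two]
      exact Finset.sum_eq_zero fun i _ => hmeanY i
  rw [← ofReal_integral_eq_lintegral_ofReal _ (.of_forall fun _ => sq_nonneg _)]
  · simp_rw [mul_pow, integral_const_mul, hS]
    rcases Nat.eq_zero_or_pos n with rfl | hn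
    · simp
    · field_simp
  · simp_rw [mul_pow]
    refine Integrable.const_mul ?_ _
    simpa using hsum.integrable_sq

namespace MemH

variable {d : ℕ} {α : ℝ} {g : (Fin d → ℝ) → ℝ}

theorem continuous (hα : 0 < α) (hg : MemH α g) : Continuous g := by
  obtain ⟨β, ⟨hβ, -⟩, lam, -, -, hHol⟩ := hg
  refine continuous_iff_continuousAt.2 fun x₀ => ?_
  have hbound : Tendsto (fun x => lam * exp (max (nrm x ^ β) (nrm x₀ ^ β)) * nrm (x - x₀) ^ α)
      (𝓝 x₀) (𝓝 0) := by
    have : Continuous fun x => lam * exp (max (nrm x ^ β) (nrm x₀ ^ β)) * nrm (x - x₀) ^ α := by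
      fun_prop (disch := first | assumption | exact hα.le)
    simpa [nrm, zero_rpow hα.ne'] using this.tendsto x₀
  rw [ContinuousAt, tendsto_iff_norm_sub_tendsto_zero]
  exact squeeze_zero (fun _ => norm_nonneg _) (fun x => hHol x x₀) hbound

theorem integrable_stdGaussian (hα : 0 < α) (hg : MemH α g) : Integrable g (stdGaussian d) := by
  obtain ⟨c, hc, hexp⟩ := exists_integrable_exp_mul_nrm_sq d
  have hcont := hg.continuous hα
  obtain ⟨β, ⟨hβ, hβ2⟩, lam, hlam, hbd, -⟩ := hg
  obtain ⟨C, hC⟩ := rpow_le_add_mul_sq hβ hβ2 hc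
  refine (hexp.const_mul (lam * exp C)).mono' hcont.aestronglyMeasurable (.of_forall fun x => ?_)
  calc ‖g x‖ ≤ lam * exp (nrm x ^ β) := hbd x
    _ ≤ lam * exp (C + c * nrm x ^ 2) :=
        mul_le_mul_of_nonneg_left (exp_le_exp.2 (hC _ (nrm_nonneg x))) hlam.le
    _ = lam * exp C * exp (c * nrm x ^ 2) := by rw [exp_add, mul_assoc]

theorem integral_importanceSummand_sub (hα : 0 < α) (hg : MemH α g) (θ θ' : Fin d → ℝ) :
    ∫ x, importanceSummand g θ x - importanceSummand g θ' x ∂stdGaussian d = 0 := by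
  have hint (ϑ : Fin d → ℝ) : Integrable (importanceSummand g ϑ) (stdGaussian d) :=
    (integrable_comp_add_mul_importanceWeight_iff ϑ g).2 (hg.integrable_stdGaussian hα)
  rw [integral_sub (hint θ) (hint θ')]
  simp only [importanceSummand, integral_comp_add_mul_importanceWeight, sub_self]

theorem exists_sq_importanceSummand_sub_le (hα : α ≤ 1) (hg : MemH α g) {M c : ℝ} (hM : 0 ≤ M)
    (hc : 0 < c) : ∃ C > 0, ∀ θ θ' : Fin d → ℝ, nrm θ ≤ M → nrm θ' ≤ M → ∀ x,
      (importanceSummand g θ x - importanceSummand g θ' x) ^ 2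
        ≤ C * nrm (θ - θ') ^ (2 * α) * exp (c * nrm x ^ 2) := by
  obtain ⟨β, ⟨hβ, hβ2⟩, lam, hlam, hbd, hHol⟩ := hg
  obtain ⟨K, hK, hKb⟩ := exists_growth_le_exp_mul_sq hβ hβ2 hM (half_pos hc)
  set A := lam * (1 + (2 * M) ^ (1 - α)) * K
  refine ⟨A ^ 2, by positivity, fun θ θ' hθ hθ' x => ?_⟩
  have hρα : 0 ≤ nrm (θ - θ') ^ α := rpow_nonneg (nrm_nonneg _) _
  have habs : |importanceSummand g θ x - importanceSummand g θ' x|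
      ≤ A * nrm (θ - θ') ^ α * exp (c / 2 * nrm x ^ 2) := by
    refine (abs_importanceSummand_sub_le hα hβ hlam.le hbd hHol hθ hθ' x).trans ?_
    have := hKb (nrm x) (nrm_nonneg x)
    have : 0 ≤ lam * (1 + (2 * M) ^ (1 - α)) * nrm (θ - θ') ^ α := by positivity
    nlinarith
  calc (importanceSummand g θ x - importanceSummand g θ' x) ^ 2
      ≤ (A * nrm (θ - θ') ^ α * exp (c / 2 * nrm x ^ 2)) ^ 2 := by
        rw [← sq_abs]; gcongr
    _ = A ^ 2 * nrm (θ - θ') ^ (2 * α) * exp (c * nrm x ^ 2) := by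
        rw [mul_pow, mul_pow, ← rpow_two (_ ^ α), ← rpow_mul (nrm_nonneg _), sq (exp _), ← exp_add]
        ring_nf

end MemH

/-- Lemma 2.12: for `g ∈ ℋ_α`, for every `M > 0` there is `C > 0` with
`E((M_n(θ, g) − M_n(θ', g))²) ≤ C |θ − θ'|^{2α} / n` for all `θ, θ'` in the ball of radius `M`
and all `n ≥ 1`. -/
theorem stmt12 {d : ℕ}
    {Ω : Type*} [MeasurableSpace Ω] (P : Measure Ω) [IsProbabilityMeasure P]
    (Gs : ℕ → Ω → Fin d → ℝ)
    (hGmeas : ∀ i, Measurable (Gs i))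
    (hGindep : iIndepFun Gs P)
    (hGlaw : ∀ i, Measure.map (Gs i) P = stdGaussian d)
    (g : (Fin d → ℝ) → ℝ) (α : ℝ) (hα : α ∈ Set.Ioc (0 : ℝ) 1) (hg : MemH α g) :
    ∀ M > (0 : ℝ), ∃ C > (0 : ℝ), ∀ θ θ' : Fin d → ℝ, nrm θ ≤ M → nrm θ' ≤ M →
      ∀ n : ℕ, 1 ≤ n →
        ∫⁻ ω, ENNReal.ofReal ((Mn Gs n θ g ω - Mn Gs n θ' g ω) ^ 2) ∂P ≤
          ENNReal.ofReal (C * nrm (θ - θ') ^ (2 * α) / n) := by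
  intro M hM
  obtain ⟨c, hc, hexp⟩ := exists_integrable_exp_mul_nrm_sq d
  obtain ⟨C, hC, hsq⟩ := hg.exists_sq_importanceSummand_sub_le hα.2 hM.le hc
  refine ⟨C * ∫ x, exp (c * nrm x ^ 2) ∂stdGaussian d, mul_pos hC (integral_exp_pos hexp),
    fun θ θ' hθ hθ' n _ => ?_⟩
  set Φ := fun x => importanceSummand g θ x - importanceSummand g θ' x
  have hgc := hg.continuous hα.1
  have hΦc : Continuous Φ :=
    (continuous_importanceSummand hgc θ).sub (continuous_importanceSummand hgc θ')
  have hΦ2 : Integrable (fun x => Φ x ^ 2) (stdGaussian d) :=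
    (hexp.const_mul _).mono' (hΦc.pow 2).aestronglyMeasurable
      (.of_forall fun x => by rw [norm_of_nonneg (sq_nonneg _)]; exact hsq θ θ' hθ hθ' x)
  simp_rw [Mn_sub_Mn]
  rw [lintegral_sq_average_eq hGmeas hGindep hGlaw hΦc.measurable
    ((memLp_two_iff_integrable_sq hΦc.aestronglyMeasurable).2 hΦ2)
    (hg.integral_importanceSummand_sub hα.1 θ θ') n]
  refine ENNReal.ofReal_le_ofReal (div_le_div_of_nonneg_right ?_ n.cast_nonneg)
  calc ∫ x, Φ x ^ 2 ∂stdGaussian d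
      ≤ ∫ x, C * nrm (θ - θ') ^ (2 * α) * exp (c * nrm x ^ 2) ∂stdGaussian d :=
        integral_mono hΦ2 (hexp.const_mul _) (hsq θ θ' hθ hθ')
    _ = C * (∫ x, exp (c * nrm x ^ 2) ∂stdGaussian d) * nrm (θ - θ') ^ (2 * α) := by
        rw [integral_const_mul]; ring
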